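/- With the setup of the 3D-matching reduction, suppose φ is a family of subcubes of {0,1}^{3q} (each a product of literals) such that every point covered by some cube of φ lies in D(W) = ∪_{A∈S} D(w^(A)), and every v^(j) is covered by some cube of φ. For each cube p ∈ φ let u(p) be the coordinatewise-maximal point of p. Then for each p ∈ φ there exists A(p) ∈ S with u(p) ≤ w^(A(p)), and the collection { A(p) : p ∈ φ } is a cover of {1,...,n} (every j belongs to some A(p)). In particular if |φ| = n/3 then S contains a cover of size n/3. -/

import Mathlib

/-! The maximal point `u p` of a cube lies below some `w^(A)`, because `u p ∈ p ⊆ D(W)`; every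
`v^(j)` covered by `p` then lies below `w^(A)` as well. Such a `v^(j)` can only hide under the one
member of `A` in its own block, so its weight-`q/2` code is dominated by, hence equal to, that
member's code, and injectivity of the encoding forces `j ∈ A`. -/

theorem eq_of_le_of_card_filter_true_eq {σ : Type*} [Fintype σ] {f g : σ → Bool}
    (hle : ∀ t, f t ≤ g t)
    (hcard : (Finset.univ.filter (fun t => f t = true)).card =
      (Finset.univ.filter (fun t => g t = true)).card) :
    f = g := by
  have hsub : Finset.univ.filter (fun t => f t = true) ⊆ Finset.univ.filter (fun t => g t = true) :=
    Finset.monotone_filter_right _ fun t _ => Bool.le_iff_imp.mp (hle t)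
  have heq := Finset.eq_of_subset_of_card_le hsub hcard.ge
  funext t
  simpa using Finset.ext_iff.mp heq t

section BlockEncoding

variable {ι κ σ : Type*} [DecidableEq κ] {c : ι → κ} {b : ι → σ → Bool} {v : ι → κ × σ → Bool}
  {w : Finset ι → κ × σ → Bool}

theorem code_le_of_encoding_le_union
    (hv : ∀ i p, v i p = if p.1 = c i then b i p.2 else false)
    (hw : ∀ A p, w A p = true ↔ ∃ i ∈ A, v i p = true)
    {A : Finset ι} {i₀ j : ι} (hblock : A.filter (fun i => c i = c j) = {i₀})
    (hle : ∀ p, v j p ≤ w A p) (t : σ) :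
    b j t ≤ b i₀ t := by
  refine Bool.le_iff_imp.mpr fun hjt => ?_
  have hvj : v j (c j, t) = true := by simp [hv, hjt]
  obtain ⟨i, hiA, hvi⟩ := (hw A (c j, t)).mp (Bool.le_iff_imp.mp (hle _) hvj)
  by_cases hblk : c j = c i
  · have hi : i ∈ A.filter (fun i => c i = c j) := Finset.mem_filter.mpr ⟨hiA, hblk.symm⟩
    rw [hblock, Finset.mem_singleton] at hi
    subst hi
    simpa [hv, hblk] using hvi
  · simp [hv, hblk] at hvi

theorem mem_of_encoding_le_union [Fintype σ]
    (hv : ∀ i p, v i p = if p.1 = c i then b i p.2 else false)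
    (hw : ∀ A p, w A p = true ↔ ∃ i ∈ A, v i p = true)
    (hb : Function.Injective b) {k : ℕ}
    (hbw : ∀ i, (Finset.univ.filter (fun t => b i t = true)).card = k)
    {A : Finset ι} {j : ι} (hA : (A.filter (fun i => c i = c j)).card = 1)
    (hle : ∀ p, v j p ≤ w A p) :
    j ∈ A := by
  obtain ⟨i₀, hblock⟩ := Finset.card_eq_one.mp hA
  have hcode : b j = b i₀ := eq_of_le_of_card_filter_true_eq
    (code_le_of_encoding_le_union hv hw hblock hle) ((hbw j).trans (hbw i₀).symm)
  have hi₀ : i₀ ∈ A.filter (fun i => c i = c j) := hblock ▸ Finset.mem_singleton_self i₀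
  exact hb hcode ▸ (Finset.mem_filter.mp hi₀).1

end BlockEncoding

theorem stmt15_general (n q : ℕ)
    (π : Fin n → Fin 3)
    (b : Fin n → Fin q → Bool) (hb : Function.Injective b)
    (hbw : ∀ i, (Finset.univ.filter (fun t => b i t = true)).card = q / 2)
    (S : Finset (Finset (Fin n)))
    (hS : ∀ A ∈ S, ∀ blk : Fin 3, (A.filter (fun i => π i = blk)).card = 1)
    (v : Fin n → Fin 3 × Fin q → Bool)
    (hv : ∀ i p, v i p = if p.1 = π i then b i p.2 else false)
    (w : Finset (Fin n) → Fin 3 × Fin q → Bool)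
    (hw : ∀ A p, w A p = true ↔ ∃ i ∈ A, v i p = true)
    (m : ℕ) (F : Fin m → Set (Fin 3 × Fin q → Bool))
    (hDW : ∀ i, ∀ x ∈ F i, ∃ A ∈ S, ∀ p, x p ≤ w A p)
    (hcov : ∀ j : Fin n, ∃ i, v j ∈ F i)
    (u : Fin m → Fin 3 × Fin q → Bool)
    (hu : ∀ i, u i ∈ F i ∧ ∀ x ∈ F i, ∀ p, x p ≤ u i p) :
    (∃ Asel : Fin m → Finset (Fin n),
      (∀ i, Asel i ∈ S ∧ ∀ p, u i p ≤ w (Asel i) p) ∧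
      ∀ j : Fin n, ∃ i, j ∈ Asel i) ∧
    (m = n / 3 → ∃ T : Finset (Finset (Fin n)),
      T ⊆ S ∧ T.card ≤ n / 3 ∧ ∀ j : Fin n, ∃ A ∈ T, j ∈ A) := by
  choose Asel hAselS hAsel using fun i => hDW i (u i) (hu i).1
  have hcover : ∀ j, ∃ i, j ∈ Asel i := fun j => by
    obtain ⟨i, hji⟩ := hcov j
    exact ⟨i, mem_of_encoding_le_union hv hw hb hbw (hS _ (hAselS i) (π j))
      fun p => ((hu i).2 (v j) hji p).trans (hAsel i p)⟩
  refine ⟨⟨Asel, fun i => ⟨hAselS i, hAsel i⟩, hcover⟩, fun hm => ?_⟩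
  refine ⟨Finset.univ.image Asel, ?_, ?_, fun j => ?_⟩
  · simpa [Finset.subset_iff] using hAselS
  · exact Finset.card_image_le.trans (by simp [hm])
  · obtain ⟨i, hi⟩ := hcover j
    exact ⟨Asel i, Finset.mem_image_of_mem _ (Finset.mem_univ i), hi⟩

/-- In the 3D-matching reduction setup below:
* \`π\` assigns each element of {1,…,n} to one of three equal-size blocks,
* \`b\` is an injective encoding by q-bit vectors of weight q/2,
* \`S\` collects 3-sets with exactly one element per block,
* \`v i\` puts \`b i\` in block \`π i\` of {0,1}^{3q} (zero elsewhere),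
* \`w A\` is the bitwise OR of the \`v i\`, i ∈ A. -/
theorem stmt15 (n q : ℕ) (hn : 3 ∣ n) (hq : Even q)
    (π : Fin n → Fin 3)
    (hπ : ∀ blk : Fin 3, (Finset.univ.filter (fun i => π i = blk)).card = n / 3)
    (b : Fin n → Fin q → Bool) (hb : Function.Injective b)
    (hbw : ∀ i, (Finset.univ.filter (fun t => b i t = true)).card = q / 2)
    (S : Finset (Finset (Fin n)))
    (hS : ∀ A ∈ S, ∀ blk : Fin 3, (A.filter (fun i => π i = blk)).card = 1)
    (v : Fin n → Fin 3 × Fin q → Bool)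
    (hv : ∀ i p, v i p = if p.1 = π i then b i p.2 else false)
    (w : Finset (Fin n) → Fin 3 × Fin q → Bool)
    (hw : ∀ A p, w A p = true ↔ ∃ i ∈ A, v i p = true)
    (m : ℕ) (F : Fin m → Set (Fin 3 × Fin q → Bool))
    (hcube : ∀ i, ∃ (T : Finset (Fin 3 × Fin q)) (a : Fin 3 × Fin q → Bool),
      F i = {x | ∀ p ∈ T, x p = a p})
    (hDW : ∀ i, ∀ x ∈ F i, ∃ A ∈ S, ∀ p, x p ≤ w A p)
    (hcov : ∀ j : Fin n, ∃ i, v j ∈ F i)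
    (u : Fin m → Fin 3 × Fin q → Bool)
    (hu : ∀ i, u i ∈ F i ∧ ∀ x ∈ F i, ∀ p, x p ≤ u i p) :
    (∃ Asel : Fin m → Finset (Fin n),
      (∀ i, Asel i ∈ S ∧ ∀ p, u i p ≤ w (Asel i) p) ∧
      ∀ j : Fin n, ∃ i, j ∈ Asel i) ∧
    (m = n / 3 → ∃ T : Finset (Finset (Fin n)),
      T ⊆ S ∧ T.card ≤ n / 3 ∧ ∀ j : Fin n, ∃ A ∈ T, j ∈ A) :=
  stmt15_general n q π b hb hbw S hS v hv w hw m F hDW hcov u hu
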